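/- arXiv:1503.06291 — 3 statements merged into one kernel-verified Lean document; each statement's English description precedes it below -/
import Mathlib

section
/- Let c > 0, ℓ ≥ 0, and s ∈ [2, ∞]. For the function F(ξ) = e^{-c t |ξ|^{-2}} / |ξ|^ℓ on the region |ξ| ≥ 1 in ℝⁿ, if ℓ s > n (with the convention that for s = ∞ one requires ℓ > 0, or ℓ ≥ 0 with the L^∞ norm), then ‖F‖_{L^s(|ξ|≥1)} ≲ (1+t)^{-ℓ/2 + n/(2s)} for all t ≥ 0, with implicit constant independent of t. -/
/-!
On `{|ξ| ≥ 1}` the Gaussian-type factor `e^{-ct|ξ|^{-2}}` turns `|ξ|^{-ℓ}` into the weight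
`(√(1+t) + |ξ|)^{-ℓ}`: if `t ≲ |ξ|²` the two are comparable, and otherwise
`e^{-cx}` with `x = t/|ξ|²` absorbs the power `(1 + x)^{ℓ/2}`. The dilation `ξ = Rη` shows that
the `L^s` norm of `(R + |ξ|)^{-ℓ}` on `ℝⁿ` is `R^{n/s - ℓ}` times that of `(1 + |η|)^{-ℓ}`, which
is finite since `ℓs > n` (or `s = ∞`); take `R = √(1+t)`.
-/

open MeasureTheory Real ENNReal Filter Topology Module

lemma exists_one_add_rpow_mul_exp_neg_le {a c : ℝ} (ha : 0 ≤ a) (hc : 0 < c) :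
    ∃ K, ∀ x : ℝ, 0 ≤ x → (1 + x) ^ a * exp (-c * x) ≤ K := by
  have hlim : Tendsto (fun x : ℝ => (1 + x) ^ a * exp (-c * (1 + x))) atTop (𝓝 0) :=
    (tendsto_rpow_mul_exp_neg_mul_atTop_nhds_zero a c hc).comp
      (tendsto_atTop_add_const_left _ 1 tendsto_id)
  obtain ⟨X, hX⟩ := eventually_atTop.1 (hlim.eventually (ge_mem_nhds one_pos))
  refine ⟨max (exp c) ((1 + X) ^ a), fun x hx => ?_⟩
  rcases le_total X x with hXx | hxX
  · calc (1 + x) ^ a * exp (-c * x) = exp c * ((1 + x) ^ a * exp (-c * (1 + x))) := by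
          rw [mul_left_comm, ← exp_add]; ring_nf
      _ ≤ exp c * 1 := by gcongr; exact hX x hXx
      _ ≤ _ := by rw [mul_one]; exact le_max_left _ _
  · calc (1 + x) ^ a * exp (-c * x) ≤ (1 + X) ^ a * 1 :=
          mul_le_mul (rpow_le_rpow (by linarith) (by linarith) ha)
            (exp_le_one_iff.2 (by nlinarith)) (exp_pos _).le (rpow_nonneg (by linarith) _)
      _ ≤ _ := by rw [mul_one]; exact le_max_right _ _

lemma exists_exp_neg_mul_div_rpow_le {c ℓ : ℝ} (hc : 0 < c) (hℓ : 0 ≤ ℓ) :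
    ∃ K > 0, ∀ t r : ℝ, 0 ≤ t → 1 ≤ r →
      exp (-c * t * r ^ (-2 : ℝ)) / r ^ ℓ ≤ K * (√(1 + t) + r) ^ (-ℓ) := by
  obtain ⟨K, hK⟩ := exists_one_add_rpow_mul_exp_neg_le (a := ℓ / 2) (by positivity) hc
  have hK0 : 0 < K := one_pos.trans_le (by simpa using hK 0 le_rfl)
  refine ⟨2 ^ ℓ * K, by positivity, fun t r ht hr => ?_⟩
  have hr0 : 0 < r := one_pos.trans_le hr
  set x := t * r ^ (-2 : ℝ) with hx
  have hx0 : 0 ≤ x := by positivity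
  have hrx : √(r ^ 2 + t) = r * √(1 + x) := by
    have : r ^ 2 + t = r ^ 2 * (1 + x) := by
      rw [hx, rpow_neg hr0.le, Real.rpow_two]; field_simp
    rw [this, sqrt_mul (sq_nonneg r), sqrt_sq hr0.le]
  have hsum : √(1 + t) + r ≤ 2 * r * √(1 + x) := by
    have h1 : √(1 + t) ≤ √(r ^ 2 + t) := sqrt_le_sqrt (by nlinarith)
    have h2 : r ≤ √(r ^ 2 + t) := le_sqrt_of_sq_le (by linarith)
    linarith
  have hpow : (√(1 + t) + r) ^ ℓ ≤ 2 ^ ℓ * r ^ ℓ * (1 + x) ^ (ℓ / 2) := by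
    calc (√(1 + t) + r) ^ ℓ ≤ (2 * r * √(1 + x)) ^ ℓ := by gcongr
      _ = 2 ^ ℓ * r ^ ℓ * (1 + x) ^ (ℓ / 2) := by
        rw [mul_rpow (by positivity) (by positivity), mul_rpow (by norm_num) hr0.le,
          sqrt_eq_rpow, ← rpow_mul (by positivity)]
        ring_nf
  have key : exp (-c * t * r ^ (-2 : ℝ)) * (√(1 + t) + r) ^ ℓ ≤ 2 ^ ℓ * K * r ^ ℓ :=
    calc exp (-c * t * r ^ (-2 : ℝ)) * (√(1 + t) + r) ^ ℓ
        = exp (-c * x) * (√(1 + t) + r) ^ ℓ := by rw [hx, mul_assoc]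
      _ ≤ exp (-c * x) * (2 ^ ℓ * r ^ ℓ * (1 + x) ^ (ℓ / 2)) := by gcongr
      _ = 2 ^ ℓ * r ^ ℓ * ((1 + x) ^ (ℓ / 2) * exp (-c * x)) := by ring
      _ ≤ 2 ^ ℓ * K * r ^ ℓ := by
          rw [mul_right_comm]; gcongr; exact hK x hx0
  rw [rpow_neg (x := √(1 + t) + r) (by positivity), ← div_eq_mul_inv,
    div_le_div_iff₀ (by positivity) (by positivity)]
  exact key

section Scaling

variable {E : Type*} [NormedAddCommGroup E] [NormedSpace ℝ E] [FiniteDimensional ℝ E]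
  [MeasurableSpace E] [BorelSpace E] (μ : Measure E) [μ.IsAddHaarMeasure]

-- At `p = ∞` the exponent is `d / 0 = 0`: dilations do not change the essential supremum.
lemma eLpNorm_comp_inv_smul {F : Type*} [NormedAddCommGroup F] (g : E → F) {R : ℝ}
    (hR : 0 < R) (p : ℝ≥0∞) :
    eLpNorm (fun x => g (R⁻¹ • x)) p μ =
      ENNReal.ofReal (R ^ ((finrank ℝ E : ℝ) / p.toReal)) * eLpNorm g p μ := by
  have hemb : MeasurableEmbedding (fun x : E => R⁻¹ • x) :=
    (Homeomorph.smulOfNeZero _ (inv_ne_zero hR.ne')).measurableEmbedding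
  change eLpNorm (g ∘ fun x => R⁻¹ • x) p μ = _
  rw [← hemb.eLpNorm_map_measure, Measure.map_addHaar_smul μ (inv_ne_zero hR.ne'),
    eLpNorm_smul_measure_of_ne_zero (by simp [hR.ne']), inv_pow, inv_inv,
    abs_of_pos (by positivity), ENNReal.ofReal_rpow_of_nonneg (by positivity) (by positivity),
    ← Real.rpow_natCast, ← rpow_mul hR.le, one_div, ENNReal.toReal_inv, smul_eq_mul,
    div_eq_mul_inv]

lemma eLpNorm_add_norm_rpow_neg (ℓ : ℝ) {R : ℝ} (hR : 0 < R) (p : ℝ≥0∞) :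
    eLpNorm (fun x : E => (R + ‖x‖) ^ (-ℓ)) p μ =
      ENNReal.ofReal (R ^ ((finrank ℝ E : ℝ) / p.toReal - ℓ)) *
        eLpNorm (fun x : E => (1 + ‖x‖) ^ (-ℓ)) p μ := by
  have hscale : (fun x : E => (R + ‖x‖) ^ (-ℓ)) =
      R ^ (-ℓ) • fun x : E => (1 + ‖R⁻¹ • x‖) ^ (-ℓ) := by
    ext x
    rw [Pi.smul_apply, smul_eq_mul, ← mul_rpow hR.le (by positivity), norm_smul,
      norm_inv, norm_of_nonneg hR.le, mul_add, mul_one, mul_inv_cancel_left₀ hR.ne']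
  rw [hscale, eLpNorm_const_smul, eLpNorm_comp_inv_smul μ (fun x => (1 + ‖x‖) ^ (-ℓ)) hR,
    ← mul_assoc, Real.enorm_eq_ofReal (by positivity), ← ENNReal.ofReal_mul (by positivity),
    ← rpow_add hR, neg_add_eq_sub]

lemma memLp_one_add_norm_rpow_neg {ℓ : ℝ} (hℓ : 0 ≤ ℓ) {p : ℝ≥0∞}
    (hp : p ≠ ∞ → (finrank ℝ E : ℝ) < ℓ * p.toReal) :
    MemLp (fun x : E => (1 + ‖x‖) ^ (-ℓ)) p μ := by
  have hmeas : AEStronglyMeasurable (fun x : E => (1 + ‖x‖) ^ (-ℓ)) μ :=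
    (by fun_prop : Measurable fun x : E => (1 + ‖x‖) ^ (-ℓ)).aestronglyMeasurable
  by_cases hp_top : p = ∞
  · subst hp_top
    refine memLp_top_of_bound hmeas 1 (ae_of_all _ fun x => ?_)
    rw [norm_of_nonneg (by positivity)]
    exact rpow_le_one_of_one_le_of_nonpos (by simp) (by linarith)
  have hp_pos : 0 < p.toReal :=
    pos_of_mul_pos_right ((Nat.cast_nonneg _).trans_lt (hp hp_top)) hℓ
  have hp0 : p ≠ 0 := fun h => by simp [h] at hp_pos
  refine (integrable_norm_rpow_iff hmeas hp0 hp_top).1 ?_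
  refine (integrable_one_add_norm (hp hp_top)).congr (ae_of_all _ fun x => ?_)
  dsimp only
  rw [norm_of_nonneg (by positivity), ← rpow_mul (by positivity), neg_mul]

lemma eLpNorm_restrict_le_of_norm_le_add_norm_rpow_neg {F : Type*} [NormedAddCommGroup F]
    {f : E → F} {S : Set E} (hS : MeasurableSet S) {K ℓ R : ℝ} (hK : 0 ≤ K) (hR : 0 < R)
    (hf : ∀ x ∈ S, ‖f x‖ ≤ K * (R + ‖x‖) ^ (-ℓ)) (p : ℝ≥0∞) :
    eLpNorm f p (μ.restrict S) ≤ ENNReal.ofReal K *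
      (ENNReal.ofReal (R ^ ((finrank ℝ E : ℝ) / p.toReal - ℓ)) *
        eLpNorm (fun x : E => (1 + ‖x‖) ^ (-ℓ)) p μ) :=
  calc eLpNorm f p (μ.restrict S)
      ≤ eLpNorm (K • fun x : E => (R + ‖x‖) ^ (-ℓ)) p (μ.restrict S) :=
        eLpNorm_mono_ae_real ((ae_restrict_iff' hS).2 (ae_of_all _ hf))
    _ ≤ eLpNorm (K • fun x : E => (R + ‖x‖) ^ (-ℓ)) p μ :=
        eLpNorm_mono_measure _ Measure.restrict_le_self
    _ = _ := by
        rw [eLpNorm_const_smul, eLpNorm_add_norm_rpow_neg μ ℓ hR, Real.enorm_eq_ofReal hK]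

end Scaling

theorem stmt0_general (n : ℕ) (c ℓ : ℝ) (hc : 0 < c) (hℓ : 0 ≤ ℓ)
    (s : ℝ≥0∞) (hns : s ≠ ∞ → (n : ℝ) < ℓ * s.toReal) :
    ∃ C > 0, ∀ t : ℝ, 0 ≤ t →
      eLpNorm
        (fun ξ : EuclideanSpace ℝ (Fin n) =>
          Real.exp (-c * t * ‖ξ‖ ^ (-2 : ℝ)) / ‖ξ‖ ^ ℓ)
        s (volume.restrict {ξ : EuclideanSpace ℝ (Fin n) | 1 ≤ ‖ξ‖})
      ≤ ENNReal.ofReal (C * (1 + t) ^ (-ℓ/2 + (n : ℝ) / (2 * s.toReal))) := by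
  obtain ⟨K, hK, hF⟩ := exists_exp_neg_mul_div_rpow_le hc hℓ
  set B := eLpNorm (fun ξ : EuclideanSpace ℝ (Fin n) => (1 + ‖ξ‖) ^ (-ℓ)) s volume
  have hB : B ≤ ENNReal.ofReal (B.toReal + 1) := by
    have hB_ne_top : B ≠ ∞ := (memLp_one_add_norm_rpow_neg volume hℓ
      (by simpa only [finrank_euclideanSpace_fin] using hns)).eLpNorm_ne_top
    rw [ENNReal.ofReal_add ENNReal.toReal_nonneg zero_le_one, ENNReal.ofReal_toReal hB_ne_top]
    exact le_self_add
  refine ⟨K * (B.toReal + 1), by positivity, fun t ht => ?_⟩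
  have hrate : √(1 + t) ^ ((finrank ℝ (EuclideanSpace ℝ (Fin n)) : ℝ) / s.toReal - ℓ) =
      (1 + t) ^ (-ℓ/2 + (n : ℝ) / (2 * s.toReal)) := by
    rw [sqrt_eq_rpow, ← rpow_mul (by positivity), finrank_euclideanSpace_fin]
    ring_nf
  calc _ ≤ ENNReal.ofReal K *
        (ENNReal.ofReal ((1 + t) ^ (-ℓ/2 + (n : ℝ) / (2 * s.toReal))) * B) := by
        rw [← hrate]
        refine eLpNorm_restrict_le_of_norm_le_add_norm_rpow_neg volume
          (measurableSet_le measurable_const measurable_norm) hK.le (by positivity)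
          (fun ξ hξ => ?_) s
        rw [norm_of_nonneg (by positivity)]
        exact hF t ‖ξ‖ ht hξ
    _ ≤ _ := by
        grw [hB, ← ENNReal.ofReal_mul (by positivity), ← ENNReal.ofReal_mul hK.le]
        exact le_of_eq (by ring_nf)

/-- For `F(ξ) = e^{-c t |ξ|^{-2}} / |ξ|^ℓ` on `{|ξ| ≥ 1} ⊆ ℝⁿ`,
if `ℓ s > n` (for `s = ∞`, `ℓ ≥ 0` with the `L^∞` norm), then
`‖F‖_{L^s(|ξ|≥1)} ≲ (1+t)^{-ℓ/2 + n/(2s)}` for all `t ≥ 0`. -/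
theorem stmt0 (n : ℕ) (hn : 0 < n) (c ℓ : ℝ) (hc : 0 < c) (hℓ : 0 ≤ ℓ)
    (s : ℝ≥0∞) (hs2 : 2 ≤ s) (hns : s ≠ ∞ → (n : ℝ) < ℓ * s.toReal) :
    ∃ C > 0, ∀ t : ℝ, 0 ≤ t →
      eLpNorm
        (fun ξ : EuclideanSpace ℝ (Fin n) =>
          Real.exp (-c * t * ‖ξ‖ ^ (-2 : ℝ)) / ‖ξ‖ ^ ℓ)
        s (volume.restrict {ξ : EuclideanSpace ℝ (Fin n) | 1 ≤ ‖ξ‖})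
      ≤ ENNReal.ofReal (C * (1 + t) ^ (-ℓ/2 + (n : ℝ) / (2 * s.toReal))) :=
  stmt0_general n c ℓ hc hℓ s hns
end

section
/- Consider the linearized Timoshenko system in Fourier space: v̂_t − iξ û + ŷ = 0, û_t − iξ v̂ = 0, ẑ_t − a iξ ŷ = 0, ŷ_t − a iξ ẑ − v̂ + γ ŷ = 0, with a > 0, a ≠ 1, γ > 0. There exist a functional E[Û(ξ,t)] with E[Û] ≈ |Û|² (uniformly in ξ) and a constant c > 0 such that d/dt E[Û] + c η(ξ)|Û|² ≤ 0, where η(ξ) = ξ²/(1+ξ²)² and Û = (v̂, û, ẑ, ŷ). -/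
/-!
The energy is `|Û|²` plus `β` times a Lyapunov correction built from the multipliers
`Re(v̄ y) / (1 + ξ²)`, `ξ Im(v̄ u) / (1 + ξ²)²`, `ξ Im(ȳ z) / (1 + ξ²)²` and `Re(ū z)`; for small
`β` it is comparable to `|Û|²`. Along solutions `|Û|²` only dissipates `2γ |y|²`, while each
multiplier yields dissipation of one further component, weighted by `1 / (1 + ξ²)` or
`ξ² / (1 + ξ²)²`. The coefficient of `Re(ū z)` is chosen so that the `Im(v̄ z)` cross terms
cancel exactly; the remaining cross terms are absorbed by Young's inequality, and for `β` small
compared with `γ` the friction absorbs everything charged to `y`. Multiplied by `(1 + ξ²)²`, the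
rate is then at most `-c ξ² |Û|²`.
-/

open Complex
open scoped InnerProductSpace

section Young

variable {F : Type*} [NormedAddCommGroup F] [InnerProductSpace ℝ F]

theorem two_mul_mul_real_inner_le (s t : ℝ) (x y : F) :
    2 * s * t * ⟪x, y⟫_ℝ ≤ s ^ 2 * ‖x‖ ^ 2 + t ^ 2 * ‖y‖ ^ 2 := by
  have h := norm_sub_sq_real (s • x) (t • y)
  rw [norm_smul, norm_smul, real_inner_smul_left, real_inner_smul_right, mul_pow, mul_pow,
    Real.norm_eq_abs, Real.norm_eq_abs, sq_abs, sq_abs] at h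
  linarith [sq_nonneg ‖s • x - t • y‖]

theorem abs_real_inner_le_half_add (x y : F) : |⟪x, y⟫_ℝ| ≤ (‖x‖ ^ 2 + ‖y‖ ^ 2) / 2 := by
  have h₁ := two_mul_mul_real_inner_le 1 1 x y
  have h₂ := two_mul_mul_real_inner_le 1 (-1) x y
  rw [abs_le]
  constructor <;> linarith

end Young

namespace Timoshenko

/- On `ℂ`, `⟪p, q⟫_ℝ = Re(p̄ q)` and `⟪p, I * q⟫_ℝ = -Im(p̄ q)`. -/
noncomputable def lyapunov (a ξ : ℝ) (v u z y : ℂ) : ℝ :=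
  -(⟪v, y⟫_ℝ / (1 + ξ ^ 2)) - ξ / (4 * (1 + ξ ^ 2) ^ 2) * (⟪v, I * u⟫_ℝ + ⟪y, I * z⟫_ℝ)
    - (a / (1 + ξ ^ 2) + 1 / (4 * (1 + ξ ^ 2) ^ 2)) * ⟪u, z⟫_ℝ

noncomputable def energy (a β ξ : ℝ) (v u z y : ℂ) : ℝ :=
  ‖v‖ ^ 2 + ‖u‖ ^ 2 + ‖z‖ ^ 2 + ‖y‖ ^ 2 + β * lyapunov a ξ v u z y

noncomputable def energyRate (a γ β ξ : ℝ) (v u z y : ℂ) : ℝ :=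
  -2 * γ * ‖y‖ ^ 2 + β / (1 + ξ ^ 2) * (‖y‖ ^ 2 - ‖v‖ ^ 2 + γ * ⟪v, y⟫_ℝ)
    + β * ξ ^ 2 / (4 * (1 + ξ ^ 2) ^ 2) * (‖v‖ ^ 2 - ‖u‖ ^ 2 + a * ‖y‖ ^ 2 - a * ‖z‖ ^ 2)
    + β * γ * ξ / (4 * (1 + ξ ^ 2) ^ 2) * ⟪y, I * z⟫_ℝ
    - β * ξ * ((a ^ 2 - 1) / (1 + ξ ^ 2) + (1 + a) / (4 * (1 + ξ ^ 2) ^ 2)) * ⟪u, I * y⟫_ℝ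

theorem abs_lyapunov_le {a : ℝ} (ξ : ℝ) (v u z y : ℂ) (ha : 0 ≤ a) :
    |lyapunov a ξ v u z y| ≤ (a + 1) * (‖v‖ ^ 2 + ‖u‖ ^ 2 + ‖z‖ ^ 2 + ‖y‖ ^ 2) := by
  have hq : 1 ≤ 1 + ξ ^ 2 := le_add_of_nonneg_right (sq_nonneg ξ)
  have hq2 : 1 ≤ (1 + ξ ^ 2) ^ 2 := one_le_pow₀ hq
  have hvy : |⟪v, y⟫_ℝ / (1 + ξ ^ 2)| ≤ (‖v‖ ^ 2 + ‖y‖ ^ 2) / 2 := by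
    rw [abs_div, abs_of_pos (show (0 : ℝ) < 1 + ξ ^ 2 by positivity)]
    exact (div_le_self (abs_nonneg _) hq).trans (abs_real_inner_le_half_add v y)
  have hskew : |ξ / (4 * (1 + ξ ^ 2) ^ 2) * (⟪v, I * u⟫_ℝ + ⟪y, I * z⟫_ℝ)|
      ≤ (‖v‖ ^ 2 + ‖u‖ ^ 2 + ‖z‖ ^ 2 + ‖y‖ ^ 2) / 16 := by
    have hξ : |ξ / (4 * (1 + ξ ^ 2) ^ 2)| ≤ 1 / 8 := by
      rw [abs_div, abs_of_pos (show (0 : ℝ) < 4 * (1 + ξ ^ 2) ^ 2 by positivity),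
        div_le_iff₀ (by positivity)]
      nlinarith [sq_nonneg (|ξ| - 1), sq_abs ξ]
    have hvu := abs_real_inner_le_half_add v (I * u)
    have hyz := abs_real_inner_le_half_add y (I * z)
    rw [norm_mul, norm_I, one_mul] at hvu hyz
    rw [abs_mul]
    calc _ ≤ 1 / 8 * |⟪v, I * u⟫_ℝ + ⟪y, I * z⟫_ℝ| := by gcongr
      _ ≤ _ := by linarith [abs_add_le ⟪v, I * u⟫_ℝ ⟪y, I * z⟫_ℝ]
  have huz : |(a / (1 + ξ ^ 2) + 1 / (4 * (1 + ξ ^ 2) ^ 2)) * ⟪u, z⟫_ℝ|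
      ≤ (a + 1 / 4) * ((‖u‖ ^ 2 + ‖z‖ ^ 2) / 2) := by
    have hk : a / (1 + ξ ^ 2) + 1 / (4 * (1 + ξ ^ 2) ^ 2) ≤ a + 1 / 4 :=
      add_le_add (div_le_self ha hq) (one_div_le_one_div_of_le (by norm_num) (by linarith))
    rw [abs_mul, abs_of_nonneg (by positivity)]
    exact mul_le_mul hk (abs_real_inner_le_half_add u z) (abs_nonneg _) (by positivity)
  rw [lyapunov, abs_le]
  have := abs_le.mp hvy
  have := abs_le.mp hskew
  have := abs_le.mp huz
  constructor <;> nlinarith [sq_nonneg ‖v‖, sq_nonneg ‖u‖, sq_nonneg ‖z‖, sq_nonneg ‖y‖]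

theorem energy_bounds {a β : ℝ} (ξ : ℝ) (v u z y : ℂ) (ha : 0 ≤ a) (hβ : 0 ≤ β)
    (hβa : β * (a + 1) ≤ 1 / 2) :
    1 / 2 * (‖v‖ ^ 2 + ‖u‖ ^ 2 + ‖z‖ ^ 2 + ‖y‖ ^ 2) ≤ energy a β ξ v u z y ∧
      energy a β ξ v u z y ≤ 3 / 2 * (‖v‖ ^ 2 + ‖u‖ ^ 2 + ‖z‖ ^ 2 + ‖y‖ ^ 2) := by
  have hN : 0 ≤ ‖v‖ ^ 2 + ‖u‖ ^ 2 + ‖z‖ ^ 2 + ‖y‖ ^ 2 := by positivity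
  have hL : |β * lyapunov a ξ v u z y| ≤ 1 / 2 * (‖v‖ ^ 2 + ‖u‖ ^ 2 + ‖z‖ ^ 2 + ‖y‖ ^ 2) := by
    rw [abs_mul, abs_of_nonneg hβ]
    calc _ ≤ β * ((a + 1) * (‖v‖ ^ 2 + ‖u‖ ^ 2 + ‖z‖ ^ 2 + ‖y‖ ^ 2)) :=
          mul_le_mul_of_nonneg_left (abs_lyapunov_le ξ v u z y ha) hβ
      _ ≤ _ := by rw [← mul_assoc]; exact mul_le_mul_of_nonneg_right hβa hN
  rw [energy]
  constructor <;> linarith [abs_le.mp hL]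

theorem hasDerivAt_energy {a γ β ξ t : ℝ} {v u z y : ℝ → ℂ}
    (hv : HasDerivAt v (I * ξ * u t - y t) t) (hu : HasDerivAt u (I * ξ * v t) t)
    (hz : HasDerivAt z (a * I * ξ * y t) t)
    (hy : HasDerivAt y (a * I * ξ * z t + v t - γ * y t) t) :
    HasDerivAt (fun s => energy a β ξ (v s) (u s) (z s) (y s))
      (energyRate a γ β ξ (v t) (u t) (z t) (y t)) t := by
  have hL := (((hv.inner ℝ hy).div_const (1 + ξ ^ 2)).neg.sub
    (((hv.inner ℝ (hu.const_mul I)).add (hy.inner ℝ (hz.const_mul I))).const_mul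
      (ξ / (4 * (1 + ξ ^ 2) ^ 2)))).sub
    ((hu.inner ℝ hz).const_mul (a / (1 + ξ ^ 2) + 1 / (4 * (1 + ξ ^ 2) ^ 2)))
  refine ((((hv.norm_sq.add hu.norm_sq).add hz.norm_sq).add hy.norm_sq).add
    (hL.const_mul β)).congr_deriv ?_
  simp only [energyRate, Complex.inner, Complex.sq_norm, Complex.normSq_apply, mul_re, mul_im,
    sub_re, sub_im, add_re, add_im, I_re, I_im, ofReal_re, ofReal_im, conj_re, conj_im]
  field_simp
  ring

/- Collects the `‖y‖ ^ 2`-coefficients charged by the Young absorptions in `energyRate_add_le`: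
`β * absorptionConstant a γ ≤ γ` lets the friction dominate them. -/
noncomputable def absorptionConstant (a γ : ℝ) : ℝ :=
  2 + a + γ ^ 2 + γ ^ 2 / a + 4 * (a ^ 2 + 1 + (1 + a) / 4) ^ 2

theorem damping_dominates {a γ β c ξ q : ℝ} (ha : 0 < a) (hβ : 0 < β) (hc : c ≤ β / 8)
    (hβγ : β * absorptionConstant a γ ≤ γ) (hq : 1 ≤ q) (hξq : ξ ^ 2 ≤ q) :
    -2 * γ * q ^ 2 + β * q + β * γ ^ 2 * q + a * β * ξ ^ 2 / 4
      + 4 * β * (a ^ 2 + 1 + (1 + a) / 4) ^ 2 * q ^ 2 + β * (γ ^ 2 / a / 4) + c * ξ ^ 2 ≤ 0 := by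
  have hqq : q ≤ q ^ 2 := by nlinarith
  have hξ2 : ξ ^ 2 ≤ q ^ 2 := hξq.trans hqq
  have hγ : 0 ≤ γ := le_trans (by unfold absorptionConstant; positivity) hβγ
  have hγa : 0 ≤ γ ^ 2 / a := by positivity
  calc _ ≤ β * absorptionConstant a γ * q ^ 2 - 2 * γ * q ^ 2 := by
        unfold absorptionConstant
        nlinarith [mul_le_mul_of_nonneg_right hc (sq_nonneg ξ),
          mul_le_mul_of_nonneg_left (sub_nonneg.2 hqq) (by positivity : 0 ≤ β * (1 + γ ^ 2)),
          mul_le_mul_of_nonneg_left (sub_nonneg.2 hξ2) (by positivity : 0 ≤ β * (1 + a)),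
          mul_nonneg (mul_nonneg hβ.le hγa) (by linarith : 0 ≤ q ^ 2 - 1),
          mul_nonneg (mul_nonneg hβ.le (by positivity : 0 ≤ 1 + a + γ ^ 2 / a)) (sq_nonneg q)]
    _ ≤ -(γ * q ^ 2) := by nlinarith [mul_le_mul_of_nonneg_right hβγ (sq_nonneg q)]
    _ ≤ 0 := neg_nonpos.2 (by positivity)

theorem energyRate_add_le {a γ β c : ℝ} (ξ : ℝ) (v u z y : ℂ) (ha : 0 < a) (hβ : 0 < β)
    (hc : c ≤ β / 8) (hca : c ≤ a * β / 8) (hβγ : β * absorptionConstant a γ ≤ γ) :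
    energyRate a γ β ξ v u z y + c * (ξ ^ 2 / (1 + ξ ^ 2) ^ 2) *
      (‖v‖ ^ 2 + ‖u‖ ^ 2 + ‖z‖ ^ 2 + ‖y‖ ^ 2) ≤ 0 := by
  set q := 1 + ξ ^ 2
  set G := (a ^ 2 - 1) * q + (1 + a) / 4 with hG
  have hq1 : 1 ≤ q := le_add_of_nonneg_right (sq_nonneg ξ)
  have hξq : ξ ^ 2 ≤ q := by linarith
  have hP : γ * ⟪v, y⟫_ℝ ≤ ‖v‖ ^ 2 / 4 + γ ^ 2 * ‖y‖ ^ 2 := by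
    linarith [two_mul_mul_real_inner_le (1 / 2) γ v y]
  have hR : -(ξ * G * ⟪u, I * y⟫_ℝ) ≤ ξ ^ 2 / 16 * ‖u‖ ^ 2 + 4 * G ^ 2 * ‖y‖ ^ 2 := by
    have := two_mul_mul_real_inner_le (ξ / 4) (-2 * G) u (I * y)
    rw [norm_mul, norm_I, one_mul] at this
    linarith
  have hS : γ * ξ / 4 * ⟪y, I * z⟫_ℝ ≤ γ ^ 2 / a / 4 * ‖y‖ ^ 2 + a * ξ ^ 2 / 16 * ‖z‖ ^ 2 := by
    have := two_mul_mul_real_inner_le (γ / 2) (a * ξ / 4) y (I * z)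
    rw [norm_mul, norm_I, one_mul] at this
    rw [← mul_le_mul_iff_of_pos_left ha]
    field_simp
    linarith
  have hG2 : G ^ 2 ≤ (a ^ 2 + 1 + (1 + a) / 4) ^ 2 * q ^ 2 := by
    have h₁ : 0 ≤ a ^ 2 * (q - 1) := by positivity
    have h₂ : 0 ≤ (1 + a) / 4 * (q - 1) := by positivity
    rw [← mul_pow, hG]
    exact sq_le_sq' (by linarith [sq_nonneg a]) (by linarith)
  have hrate : energyRate a γ β ξ v u z y = (-2 * γ * q ^ 2 * ‖y‖ ^ 2
      + β * q * (‖y‖ ^ 2 - ‖v‖ ^ 2 + γ * ⟪v, y⟫_ℝ)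
      + β * ξ ^ 2 / 4 * (‖v‖ ^ 2 - ‖u‖ ^ 2 + a * ‖y‖ ^ 2 - a * ‖z‖ ^ 2)
      + β * (γ * ξ / 4 * ⟪y, I * z⟫_ℝ) - β * (ξ * G * ⟪u, I * y⟫_ℝ)) / q ^ 2 := by
    unfold energyRate
    field_simp
    ring
  have hV : (-(3 * β * q / 4) + β * ξ ^ 2 / 4 + c * ξ ^ 2) * ‖v‖ ^ 2 ≤ 0 :=
    mul_nonpos_of_nonpos_of_nonneg (by nlinarith) (sq_nonneg _)
  have hU : (-(3 * β * ξ ^ 2 / 16) + c * ξ ^ 2) * ‖u‖ ^ 2 ≤ 0 :=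
    mul_nonpos_of_nonpos_of_nonneg (by nlinarith) (sq_nonneg _)
  have hZ : (-(3 * a * β * ξ ^ 2 / 16) + c * ξ ^ 2) * ‖z‖ ^ 2 ≤ 0 :=
    mul_nonpos_of_nonpos_of_nonneg (by nlinarith [mul_pos ha hβ]) (sq_nonneg _)
  have hY := mul_nonpos_of_nonpos_of_nonneg (damping_dominates ha hβ hc hβγ hq1 hξq)
    (sq_nonneg ‖y‖)
  rw [hrate, mul_div_assoc', div_mul_eq_mul_div (c * ξ ^ 2), ← add_div]
  refine div_nonpos_of_nonpos_of_nonneg ?_ (sq_nonneg q)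
  linarith [mul_le_mul_of_nonneg_left hP (by positivity : 0 ≤ β * q),
    mul_le_mul_of_nonneg_left hR hβ.le, mul_le_mul_of_nonneg_left hS hβ.le,
    mul_le_mul_of_nonneg_right hG2 (by positivity : 0 ≤ 4 * β * ‖y‖ ^ 2)]

theorem exists_lyapunovWeight {a γ : ℝ} (ha : 0 < a) (hγ : 0 < γ) :
    ∃ β, 0 < β ∧ β * absorptionConstant a γ ≤ γ ∧ β * (a + 1) ≤ 1 / 2 := by
  have hM : 0 < absorptionConstant a γ := by unfold absorptionConstant; positivity
  refine ⟨min (γ / absorptionConstant a γ) (1 / (2 * (a + 1))),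
    lt_min (by positivity) (by positivity), ?_, ?_⟩
  · exact (le_div_iff₀ hM).mp (min_le_left _ _)
  · have := (le_div_iff₀ (by positivity)).mp
      (min_le_right (γ / absorptionConstant a γ) (1 / (2 * (a + 1))))
    linarith

end Timoshenko

theorem stmt11_general (a γ : ℝ) (ha : 0 < a) (hγ : 0 < γ) :
    ∃ (E : ℝ → ℂ → ℂ → ℂ → ℂ → ℝ) (c C₁ C₂ : ℝ), 0 < c ∧ 0 < C₁ ∧ 0 < C₂ ∧
      (∀ (ξ : ℝ) (v u z y : ℂ),
        C₁ * (‖v‖ ^ 2 + ‖u‖ ^ 2 + ‖z‖ ^ 2 + ‖y‖ ^ 2) ≤ E ξ v u z y ∧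
        E ξ v u z y ≤ C₂ * (‖v‖ ^ 2 + ‖u‖ ^ 2 + ‖z‖ ^ 2 + ‖y‖ ^ 2)) ∧
      (∀ (ξ : ℝ) (v u z y : ℝ → ℂ),
        (∀ t, HasDerivAt v (I * ξ * u t - y t) t) →
        (∀ t, HasDerivAt u (I * ξ * v t) t) →
        (∀ t, HasDerivAt z ((a : ℂ) * I * ξ * y t) t) →
        (∀ t, HasDerivAt y ((a : ℂ) * I * ξ * z t + v t - (γ : ℂ) * y t) t) →
        ∃ D : ℝ → ℝ, ∀ t,
          HasDerivAt (fun s => E ξ (v s) (u s) (z s) (y s)) (D t) t ∧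
          D t + c * (ξ ^ 2 / (1 + ξ ^ 2) ^ 2) *
            (‖v t‖ ^ 2 + ‖u t‖ ^ 2 + ‖z t‖ ^ 2 + ‖y t‖ ^ 2) ≤ 0) := by
  obtain ⟨β, hβ, hβγ, hβa⟩ := Timoshenko.exists_lyapunovWeight ha hγ
  refine ⟨Timoshenko.energy a β, min (β / 8) (a * β / 8), 1 / 2, 3 / 2,
    lt_min (by positivity) (by positivity), by norm_num, by norm_num,
    fun ξ v u z y => Timoshenko.energy_bounds ξ v u z y ha.le hβ.le hβa,
    fun ξ v u z y hv hu hz hy => ⟨_, fun t =>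
      ⟨Timoshenko.hasDerivAt_energy (hv t) (hu t) (hz t) (hy t),
        Timoshenko.energyRate_add_le ξ _ _ _ _ ha hβ (min_le_left _ _) (min_le_right _ _) hβγ⟩⟩⟩

/-- For the Fourier-transformed linearized Timoshenko system
with `a ≠ 1`, there is an energy functional `E ≈ |Û|²` and `c > 0` with
`d/dt E[Û] + c η(ξ) |Û|² ≤ 0`, where `η(ξ) = ξ²/(1+ξ²)²`. -/
theorem stmt11 (a γ : ℝ) (ha : 0 < a) (ha1 : a ≠ 1) (hγ : 0 < γ) :
    ∃ (E : ℝ → ℂ → ℂ → ℂ → ℂ → ℝ) (c C₁ C₂ : ℝ), 0 < c ∧ 0 < C₁ ∧ 0 < C₂ ∧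
      (∀ (ξ : ℝ) (v u z y : ℂ),
        C₁ * (‖v‖ ^ 2 + ‖u‖ ^ 2 + ‖z‖ ^ 2 + ‖y‖ ^ 2) ≤ E ξ v u z y ∧
        E ξ v u z y ≤ C₂ * (‖v‖ ^ 2 + ‖u‖ ^ 2 + ‖z‖ ^ 2 + ‖y‖ ^ 2)) ∧
      (∀ (ξ : ℝ) (v u z y : ℝ → ℂ),
        (∀ t, HasDerivAt v (I * ξ * u t - y t) t) →
        (∀ t, HasDerivAt u (I * ξ * v t) t) →
        (∀ t, HasDerivAt z ((a : ℂ) * I * ξ * y t) t) →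
        (∀ t, HasDerivAt y ((a : ℂ) * I * ξ * z t + v t - (γ : ℂ) * y t) t) →
        ∃ D : ℝ → ℝ, ∀ t,
          HasDerivAt (fun s => E ξ (v s) (u s) (z s) (y s)) (D t) t ∧
          D t + c * (ξ ^ 2 / (1 + ξ ^ 2) ^ 2) *
            (‖v t‖ ^ 2 + ‖u t‖ ^ 2 + ‖z t‖ ^ 2 + ‖y t‖ ^ 2) ≤ 0) :=
  stmt11_general a γ ha hγ
end

section
/- Let (v,u,z,y) be a smooth solution on ℝ of the linear system v_t − u_x + y = 0, u_t − v_x = 0, z_t − a y_x = 0, y_t − a z_x − v + γ y = G, with a > 0, γ > 0, and G a given smooth function, all with sufficient decay at infinity. Then for the functional E₁(t) = −∫_ℝ (v y + a u z) dx one has d/dt E₁ + ½ ∫_ℝ v² dx ≤ C( ∫_ℝ y² dx + |a²−1| (∫_ℝ y² dx)^{1/2} (∫_ℝ u_x² dx)^{1/2} + (∫_ℝ G² dx)^{1/2} (∫_ℝ v² dx)^{1/2} ) for a constant C depending only on a and γ. -/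
open MeasureTheory Real
open Set Topology

lemma prodmk_closedEmbedding (t : ℝ) : Topology.IsClosedEmbedding (Prod.mk t : ℝ → ℝ × ℝ) := by
  have : Isometry (Prod.mk t : ℝ → ℝ × ℝ) := by
    apply Isometry.of_dist_eq
    intro x y
    simp [Prod.dist_eq, dist_nonneg]
  exact this.isClosedEmbedding

-- slice lemmas
lemma slice_cont {f : ℝ → ℝ → ℝ} (hf : ContDiff ℝ (⊤ : ℕ∞) (Function.uncurry f)) (t : ℝ) :
    ContDiff ℝ (⊤ : ℕ∞) (f t) :=
  hf.comp (contDiff_const.prodMk contDiff_id)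

lemma slice_supp {f : ℝ → ℝ → ℝ} (hs : HasCompactSupport (Function.uncurry f)) (t : ℝ) :
    HasCompactSupport (f t) :=
  hs.comp_isClosedEmbedding (prodmk_closedEmbedding t)

lemma ibp_zero {φ : ℝ → ℝ} (hφ : ContDiff ℝ (⊤ : ℕ∞) φ) (hs : HasCompactSupport φ) :
    ∫ x, deriv φ x = 0 := by
  have hd : Continuous (deriv φ) := (hφ.of_le (by exact WithTop.coe_le_coe.mpr le_top) : ContDiff ℝ 2 φ).continuous_deriv one_le_two
  have hsd : HasCompactSupport (deriv φ) := hs.deriv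
  have hint : Integrable (deriv φ) := hd.integrable_of_hasCompactSupport hsd
  have h1 := HasCompactSupport.integral_Iic_deriv_eq (hφ.of_le (by simp) : ContDiff ℝ 1 φ) hs 0
  have h2 := HasCompactSupport.integral_Ioi_deriv_eq (hφ.of_le (by simp) : ContDiff ℝ 1 φ) hs 0
  rw [← intervalIntegral.integral_Iic_add_Ioi hint.integrableOn hint.integrableOn, h1, h2]
  ring

lemma cs_ineq {f g : ℝ → ℝ} (hf : Continuous f) (hg : Continuous g)
    (hsf : HasCompactSupport f) (hsg : HasCompactSupport g) :
    |∫ x, f x * g x| ≤ Real.sqrt (∫ x, (f x) ^ 2) * Real.sqrt (∫ x, (g x) ^ 2) := by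
  have hint : Integrable (fun x => f x * g x) :=
    (hf.mul hg).integrable_of_hasCompactSupport (hsf.mul_right)
  have habs : |∫ x, f x * g x| ≤ ∫ x, |f x| * |g x| := by
    calc |∫ x, f x * g x| ≤ ∫ x, |f x * g x| := by
          simpa [Real.norm_eq_abs, abs_mul] using
            norm_integral_le_integral_norm (μ := volume) (fun x => f x * g x)
    _ = ∫ x, |f x| * |g x| := by simp [abs_mul]
  have hmemf : MemLp (fun x => |f x|) (ENNReal.ofReal 2) volume := by
    have := (hf.abs.memLp_of_hasCompactSupport (p := 2) (μ := volume) hsf.abs)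
    convert this using 2
    norm_num [ENNReal.ofReal_ofNat]
  have hmemg : MemLp (fun x => |g x|) (ENNReal.ofReal 2) volume := by
    have := (hg.abs.memLp_of_hasCompactSupport (p := 2) (μ := volume) hsg.abs)
    convert this using 2
    norm_num [ENNReal.ofReal_ofNat]
  have hcs := integral_mul_le_Lp_mul_Lq_of_nonneg (Real.holderConjugate_iff_eq_conjExponent (by norm_num) |>.mpr (by norm_num))
    (Filter.Eventually.of_forall (fun x => abs_nonneg (f x)))
    (Filter.Eventually.of_forall (fun x => abs_nonneg (g x))) hmemf hmemg
  refine habs.trans (hcs.trans_eq ?_)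
  rw [Real.sqrt_eq_rpow, Real.sqrt_eq_rpow]
  have h2 : ∀ r : ℝ, |r| ^ (2:ℝ) = r ^ 2 := fun r => by
    rw [show (2:ℝ) = ((2:ℕ):ℝ) by norm_num, Real.rpow_natCast, sq_abs]
  simp_rw [h2]

/-- partial t derivative has HasDerivAt -/
lemma partial_hasDerivAt {F : ℝ → ℝ → ℝ} (hF : ContDiff ℝ (⊤ : ℕ∞) (Function.uncurry F))
    (s x : ℝ) :
    HasDerivAt (fun s' => F s' x)
      (fderiv ℝ (Function.uncurry F) (s, x) (1, 0)) s := by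
  have hdiff : HasFDerivAt (Function.uncurry F) (fderiv ℝ (Function.uncurry F) (s, x)) (s, x) :=
    (hF.differentiable (by simp) (s, x)).hasFDerivAt
  have hline : HasDerivAt (fun s' : ℝ => (s', x)) ((1 : ℝ), (0 : ℝ)) s :=
    (hasDerivAt_id s).prodMk (hasDerivAt_const s x)
  exact hdiff.comp_hasDerivAt s hline

lemma partial_cont {F : ℝ → ℝ → ℝ} (hF : ContDiff ℝ (⊤ : ℕ∞) (Function.uncurry F)) :
    Continuous (fun p : ℝ × ℝ => fderiv ℝ (Function.uncurry F) p (1, 0)) :=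
  (hF.continuous_fderiv (by simp)).clm_apply continuous_const

lemma partial_supp {F : ℝ → ℝ → ℝ} (hs : HasCompactSupport (Function.uncurry F)) :
    HasCompactSupport (fun p : ℝ × ℝ => fderiv ℝ (Function.uncurry F) p (1, 0)) :=
  hs.fderiv_apply ℝ (1, 0)

/-- Differentiation under the integral sign. -/
lemma deriv_under_integral {F : ℝ → ℝ → ℝ} (hF : ContDiff ℝ (⊤ : ℕ∞) (Function.uncurry F))
    (hs : HasCompactSupport (Function.uncurry F)) (t : ℝ) :
    HasDerivAt (fun s => ∫ x, F s x) (∫ x, deriv (fun s => F s x) t) t := by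
  set Ft : ℝ → ℝ → ℝ := fun s x => fderiv ℝ (Function.uncurry F) (s, x) (1, 0) with hFt
  have hFtc : Continuous (Function.uncurry Ft) := partial_cont hF
  have hFts : HasCompactSupport (Function.uncurry Ft) := partial_supp hs
  -- bound
  obtain ⟨p₀, hp₀⟩ := hFtc.abs.exists_forall_ge_of_hasCompactSupport hFts.abs
  set M : ℝ := |Function.uncurry Ft p₀| with hM
  set K2 : Set ℝ := Prod.snd '' tsupport (Function.uncurry F) with hK2
  have hK2c : IsCompact K2 := hs.image continuous_snd
  have hbound_int : Integrable (K2.indicator fun _ => M) := by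
    rw [integrable_indicator_iff hK2c.isClosed.measurableSet]
    exact integrableOn_const hK2c.measure_lt_top.ne
  have key := hasDerivAt_integral_of_dominated_loc_of_deriv_le (F := F)
    (F' := Ft) (bound := K2.indicator fun _ => M) (μ := volume) (x₀ := t)
    (s := Metric.ball t 1) (Metric.ball_mem_nhds t one_pos)
    (Filter.Eventually.of_forall fun s =>
      ((slice_cont hF s).continuous).aestronglyMeasurable)
    (((slice_cont hF t).continuous).integrable_of_hasCompactSupport (slice_supp hs t))
    ((hFtc.comp (Continuous.prodMk_right t)).aestronglyMeasurable)
    (Filter.Eventually.of_forall fun x s _ => ?_)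
    hbound_int
    (Filter.Eventually.of_forall fun x s _ => partial_hasDerivAt hF s x)
  · refine key.2.congr_deriv ?_
    apply integral_congr_ae
    filter_upwards with x
    exact ((partial_hasDerivAt hF t x).deriv).symm
  · -- bound check
    by_cases hx : x ∈ K2
    · simp only [Set.indicator_of_mem hx]
      simpa using hp₀ (s, x)
    · have hnm : (s, x) ∉ tsupport (Function.uncurry F) := fun h => hx ⟨(s, x), h, rfl⟩
      have hzero : Ft s x = 0 := by
        simp only [hFt]
        rw [fderiv_of_notMem_tsupport ℝ hnm]
        rfl
      rw [Set.indicator_of_notMem hx]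
      simp [hzero]

lemma hcs_of_zero {f g : ℝ → ℝ} (h : HasCompactSupport f) (hz : ∀ x, f x = 0 → g x = 0) :
    HasCompactSupport g := by
  apply h.mono
  intro x hx
  simp only [Function.mem_support] at hx ⊢
  exact fun h0 => hx (hz x h0)

lemma split_int {p1 p2 p3 p4 p5 p6 p7 : ℝ → ℝ}
    (h1 : Integrable p1) (h2 : Integrable p2) (h3 : Integrable p3) (h4 : Integrable p4)
    (h5 : Integrable p5) (h6 : Integrable p6) (h7 : Integrable p7) :
    ∫ x, (p1 x - p2 x + p3 x - p4 x + p5 x + p6 x + p7 x)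
      = (∫ x, p1 x) - (∫ x, p2 x) + (∫ x, p3 x) - (∫ x, p4 x) + (∫ x, p5 x)
        + (∫ x, p6 x) + (∫ x, p7 x) := by
  rw [integral_add (f := fun x => p1 x - p2 x + p3 x - p4 x + p5 x + p6 x) (g := p7)
      (by exact ((((h1.sub h2).add h3).sub h4).add h5).add h6) h7,
    integral_add (f := fun x => p1 x - p2 x + p3 x - p4 x + p5 x) (g := p6)
      (by exact (((h1.sub h2).add h3).sub h4).add h5) h6,
    integral_add (f := fun x => p1 x - p2 x + p3 x - p4 x) (g := p5)
      (by exact ((h1.sub h2).add h3).sub h4) h5,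
    integral_sub (f := fun x => p1 x - p2 x + p3 x) (g := p4)
      (by exact (h1.sub h2).add h3) h4,
    integral_add (f := fun x => p1 x - p2 x) (g := p3) (by exact h1.sub h2) h3,
    integral_sub h1 h2]

lemma final_ineq (γ k A B W Y V sY sV sU sG : ℝ) (hγ : 0 < γ)
    (hY2 : sY ^ 2 = Y) (hV2 : sV ^ 2 = V) (hsY : 0 ≤ sY) (hsV : 0 ≤ sV)
    (hsU : 0 ≤ sU) (hsG : 0 ≤ sG)
    (hA : |A| ≤ sU * sY) (hB : |B| ≤ sV * sY) (hW : |W| ≤ sV * sG) :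
    -((1 - k) * A - Y + V - γ * B + W) + 1/2 * V
      ≤ (1 + γ ^ 2 / 2) * (Y + |k - 1| * sY * sU + sG * sV) := by
  have h1 : (k - 1) * A ≤ |k - 1| * (sY * sU) := by
    calc (k - 1) * A ≤ |(k - 1) * A| := le_abs_self _
    _ = |k - 1| * |A| := abs_mul _ _
    _ ≤ |k - 1| * (sU * sY) := mul_le_mul_of_nonneg_left hA (abs_nonneg _)
    _ = |k - 1| * (sY * sU) := by ring
  have h2 : γ * B ≤ γ * (sV * sY) := mul_le_mul_of_nonneg_left ((le_abs_self B).trans hB) hγ.le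
  have h3 : -W ≤ sV * sG := (neg_le_abs W).trans hW
  have h4 : γ * (sV * sY) ≤ 1/2 * V + γ ^ 2 / 2 * Y := by
    nlinarith [sq_nonneg (sV - γ * sY)]
  have p1 : 0 ≤ γ ^ 2 / 2 * (|k - 1| * (sY * sU)) := by positivity
  have p2 : 0 ≤ γ ^ 2 / 2 * (sG * sV) := by positivity
  nlinarith [h1, h2, h3, h4, p1, p2]


/-- Cross-term energy identity for the linear Timoshenko
system producing the dissipation of `v`: for `E₁(t) = −∫ (v y + a u z) dx`,
`d/dt E₁ + ½∫v² ≤ C(∫y² + |a²−1| (∫y²)^{1/2}(∫u_x²)^{1/2} + (∫G²)^{1/2}(∫v²)^{1/2})`. -/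
theorem stmt19 (a γ : ℝ) (ha : 0 < a) (hγ : 0 < γ) :
    ∃ C > 0, ∀ v u z y G : ℝ → ℝ → ℝ,
      ContDiff ℝ (⊤ : ℕ∞) (Function.uncurry v) → ContDiff ℝ (⊤ : ℕ∞) (Function.uncurry u) →
      ContDiff ℝ (⊤ : ℕ∞) (Function.uncurry z) → ContDiff ℝ (⊤ : ℕ∞) (Function.uncurry y) →
      ContDiff ℝ (⊤ : ℕ∞) (Function.uncurry G) →
      HasCompactSupport (Function.uncurry v) → HasCompactSupport (Function.uncurry u) →
      HasCompactSupport (Function.uncurry z) → HasCompactSupport (Function.uncurry y) →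
      HasCompactSupport (Function.uncurry G) →
      -- the PDE system: v_t − u_x + y = 0, u_t − v_x = 0, z_t − a y_x = 0,
      -- y_t − a z_x − v + γ y = G
      (∀ t x, deriv (fun s => v s x) t - deriv (fun w => u t w) x + y t x = 0) →
      (∀ t x, deriv (fun s => u s x) t - deriv (fun w => v t w) x = 0) →
      (∀ t x, deriv (fun s => z s x) t - a * deriv (fun w => y t w) x = 0) →
      (∀ t x, deriv (fun s => y s x) t - a * deriv (fun w => z t w) x
                - v t x + γ * y t x = G t x) →
      ∀ t : ℝ, ∃ D : ℝ,
        HasDerivAt (fun s => -∫ x, (v s x * y s x + a * u s x * z s x)) D t ∧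
        D + (1/2) * ∫ x, (v t x) ^ 2 ≤
          C * ((∫ x, (y t x) ^ 2)
            + |a ^ 2 - 1| * Real.sqrt (∫ x, (y t x) ^ 2) *
                Real.sqrt (∫ x, (deriv (fun w => u t w) x) ^ 2)
            + Real.sqrt (∫ x, (G t x) ^ 2) * Real.sqrt (∫ x, (v t x) ^ 2)) := by
  refine ⟨1 + γ ^ 2 / 2, by positivity, ?_⟩
  intro v u z y G hv hu hz hy hG hsv hsu hsz hsy hsG heq1 heq2 heq3 heq4 t
  -- smoothness and support of the integrand
  have hΨc : ContDiff ℝ (⊤ : ℕ∞) (Function.uncurry fun s x => v s x * y s x + a * u s x * z s x) :=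
    (hv.mul hy).add ((contDiff_const.mul hu).mul hz)
  have hΨs : HasCompactSupport (Function.uncurry fun s x => v s x * y s x + a * u s x * z s x) := by
    exact HasCompactSupport.add (hsv.mul_right) ((hsu.mul_left).mul_right)
  refine ⟨-(∫ x, deriv (fun s => v s x * y s x + a * u s x * z s x) t),
    (deriv_under_integral hΨc hΨs t).neg, ?_⟩
  -- slice facts at time t
  have cv : Continuous (v t) := (slice_cont hv t).continuous
  have cu : Continuous (u t) := (slice_cont hu t).continuous
  have cz : Continuous (z t) := (slice_cont hz t).continuous
  have cy : Continuous (y t) := (slice_cont hy t).continuous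
  have cG : Continuous (G t) := (slice_cont hG t).continuous
  have sv : HasCompactSupport (v t) := slice_supp hsv t
  have su : HasCompactSupport (u t) := slice_supp hsu t
  have sz : HasCompactSupport (z t) := slice_supp hsz t
  have sy : HasCompactSupport (y t) := slice_supp hsy t
  have sG : HasCompactSupport (G t) := slice_supp hsG t
  have cux : Continuous (deriv (u t)) := (slice_cont hu t).continuous_deriv (by simp)
  have sux : HasCompactSupport (deriv (u t)) := su.deriv
  -- pointwise identity
  have hpt : ∀ x, deriv (fun s => v s x * y s x + a * u s x * z s x) t
      = ((1 - a ^ 2) * (deriv (fun w => u t w) x * y t x) - y t x ^ 2 + v t x ^ 2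
          - γ * (v t x * y t x) + v t x * G t x)
        + a * deriv (fun w => v t w * z t w) x
        + a ^ 2 * deriv (fun w => u t w * y t w) x := by
    intro x
    have hv' : HasDerivAt (fun s => v s x) (deriv (fun s => v s x) t) t :=
      ((partial_hasDerivAt hv t x).differentiableAt).hasDerivAt
    have hu' : HasDerivAt (fun s => u s x) (deriv (fun s => u s x) t) t :=
      ((partial_hasDerivAt hu t x).differentiableAt).hasDerivAt
    have hz' : HasDerivAt (fun s => z s x) (deriv (fun s => z s x) t) t :=
      ((partial_hasDerivAt hz t x).differentiableAt).hasDerivAt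
    have hy' : HasDerivAt (fun s => y s x) (deriv (fun s => y s x) t) t :=
      ((partial_hasDerivAt hy t x).differentiableAt).hasDerivAt
    have hmain := (hv'.mul hy').add ((hu'.const_mul a).mul hz')
    rw [(show HasDerivAt (fun s => v s x * y s x + a * u s x * z s x) _ t from hmain).deriv]
    have hvx : HasDerivAt (v t) (deriv (v t) x) x :=
      (((slice_cont hv t).differentiable (by simp)) x).hasDerivAt
    have hux : HasDerivAt (u t) (deriv (u t) x) x :=
      (((slice_cont hu t).differentiable (by simp)) x).hasDerivAt
    have hzx : HasDerivAt (z t) (deriv (z t) x) x :=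
      (((slice_cont hz t).differentiable (by simp)) x).hasDerivAt
    have hyx : HasDerivAt (y t) (deriv (y t) x) x :=
      (((slice_cont hy t).differentiable (by simp)) x).hasDerivAt
    have h1 : deriv (fun w => v t w * z t w) x
        = deriv (v t) x * z t x + v t x * deriv (z t) x := (hvx.mul hzx).deriv
    have h2 : deriv (fun w => u t w * y t w) x
        = deriv (u t) x * y t x + u t x * deriv (y t) x := (hux.mul hyx).deriv
    rw [h1, h2]
    have e1 : deriv (fun s => v s x) t = deriv (fun w => u t w) x - y t x := by
      linarith [heq1 t x]
    have e2 : deriv (fun s => u s x) t = deriv (fun w => v t w) x := by linarith [heq2 t x]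
    have e3 : deriv (fun s => z s x) t = a * deriv (fun w => y t w) x := by
      linarith [heq3 t x]
    have e4 : deriv (fun s => y s x) t
        = a * deriv (fun w => z t w) x + v t x - γ * y t x + G t x := by linarith [heq4 t x]
    rw [e1, e2, e3, e4]
    ring
  -- integrability of the pieces
  have i1 : Integrable (fun x => (1 - a ^ 2) * (deriv (fun w => u t w) x * y t x)) :=
    (continuous_const.mul (cux.mul cy)).integrable_of_hasCompactSupport
      (hcs_of_zero sy (fun x h0 => by simp [h0]))
  have i2 : Integrable (fun x => y t x ^ 2) :=
    (cy.pow 2).integrable_of_hasCompactSupport (hcs_of_zero sy (fun x h0 => by simp [h0]))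
  have i3 : Integrable (fun x => v t x ^ 2) :=
    (cv.pow 2).integrable_of_hasCompactSupport (hcs_of_zero sv (fun x h0 => by simp [h0]))
  have i4 : Integrable (fun x => γ * (v t x * y t x)) :=
    (continuous_const.mul (cv.mul cy)).integrable_of_hasCompactSupport
      (hcs_of_zero sv (fun x h0 => by simp [h0]))
  have i5 : Integrable (fun x => v t x * G t x) :=
    (cv.mul cG).integrable_of_hasCompactSupport (hcs_of_zero sv (fun x h0 => by simp [h0]))
  have ivz : ContDiff ℝ (⊤ : ℕ∞) (fun w => v t w * z t w) := (slice_cont hv t).mul (slice_cont hz t)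
  have svz : HasCompactSupport (fun w => v t w * z t w) :=
    hcs_of_zero sv (fun x h0 => by simp [h0])
  have iuy : ContDiff ℝ (⊤ : ℕ∞) (fun w => u t w * y t w) := (slice_cont hu t).mul (slice_cont hy t)
  have suy : HasCompactSupport (fun w => u t w * y t w) :=
    hcs_of_zero sy (fun x h0 => by simp [h0])
  have i6 : Integrable (fun x => a * deriv (fun w => v t w * z t w) x) :=
    (continuous_const.mul (ivz.continuous_deriv (by simp))).integrable_of_hasCompactSupport
      (hcs_of_zero svz.deriv (fun x h0 => by simp [h0]))
  have i7 : Integrable (fun x => a ^ 2 * deriv (fun w => u t w * y t w) x) :=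
    (continuous_const.mul (iuy.continuous_deriv (by simp))).integrable_of_hasCompactSupport
      (hcs_of_zero suy.deriv (fun x h0 => by simp [h0]))
  -- compute the integral of the derivative
  have hI : (∫ x, deriv (fun s => v s x * y s x + a * u s x * z s x) t)
      = (1 - a ^ 2) * (∫ x, deriv (fun w => u t w) x * y t x) - (∫ x, y t x ^ 2)
        + (∫ x, v t x ^ 2) - γ * (∫ x, v t x * y t x) + (∫ x, v t x * G t x) := by
    simp_rw [hpt]
    rw [split_int i1 i2 i3 i4 i5 i6 i7, integral_const_mul, integral_const_mul,
      integral_const_mul, integral_const_mul,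
      ibp_zero ivz svz, ibp_zero iuy suy]
    ring
  rw [hI]
  have hY0 : (0:ℝ) ≤ ∫ x, y t x ^ 2 := integral_nonneg fun x => sq_nonneg _
  have hV0 : (0:ℝ) ≤ ∫ x, v t x ^ 2 := integral_nonneg fun x => sq_nonneg _
  exact final_ineq γ (a ^ 2) _ _ _ _ _ _ _ _ _ hγ (Real.sq_sqrt hY0) (Real.sq_sqrt hV0)
    (Real.sqrt_nonneg _) (Real.sqrt_nonneg _) (Real.sqrt_nonneg _) (Real.sqrt_nonneg _)
    (cs_ineq cux cy sux sy) (cs_ineq cv cy sv sy) (cs_ineq cv cG sv sG)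
end
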